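/- arXiv:1710.10888 — 5 statements merged into one kernel-verified Lean document; each statement's English description precedes it below -/
import Mathlib

section
/- Let P be a set of points in ℝ² such that no two distinct points of P have the same second coordinate. Let a, b ∈ ℝ², let Q₁ = {x ∈ ℝ² : x₁ > a₁ ∧ x₂ > a₂} be the open NE-quadrant with apex a and Q₂ = {x ∈ ℝ² : x₁ < b₁ ∧ x₂ > b₂} be the open NW-quadrant with apex b. Suppose Q₁ and Q₂ are both P-free, that there exists q₁ ∈ P with q₁ = (a₁, y₁) for some y₁ ≥ a₂ (a point of P on the vertical bounding ray of Q₁), and that there exists q₂ ∈ P with q₂ = (b₁, y₂) for some y₂ ≥ b₂ (a point of P on the vertical bounding ray of Q₂). Then Q₁ ∩ Q₂ = ∅. (This is the core of the paper's Lemma 'overlap_oriented': two extremal θ-quadrants that are non-opposite — here an NE and an NW quadrant — cannot intersect.) -/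
/-- If the open NE-quadrant `Q₁` with apex `a` and the open NW-quadrant `Q₂`
with apex `b` are both `P`-free, each has a point of `P` on its vertical bounding ray, and no two
distinct points of `P` share the same second coordinate, then `Q₁ ∩ Q₂ = ∅`. -/
theorem disjoint_NE_NW_quadrants
    (P : Set (EuclideanSpace ℝ (Fin 2)))
    (hgen : ∀ p ∈ P, ∀ q ∈ P, p ≠ q → p 1 ≠ q 1)
    (a b : EuclideanSpace ℝ (Fin 2))
    (Q₁ Q₂ : Set (EuclideanSpace ℝ (Fin 2)))
    (hQ₁ : Q₁ = {x : EuclideanSpace ℝ (Fin 2) | a 0 < x 0 ∧ a 1 < x 1})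
    (hQ₂ : Q₂ = {x : EuclideanSpace ℝ (Fin 2) | x 0 < b 0 ∧ b 1 < x 1})
    (hfree₁ : Q₁ ∩ P = ∅) (hfree₂ : Q₂ ∩ P = ∅)
    (hq₁ : ∃ q₁ ∈ P, q₁ 0 = a 0 ∧ a 1 ≤ q₁ 1)
    (hq₂ : ∃ q₂ ∈ P, q₂ 0 = b 0 ∧ b 1 ≤ q₂ 1) :
    Q₁ ∩ Q₂ = ∅ := by
  obtain ⟨q₁, hq₁P, hq₁0, hq₁1⟩ := hq₁
  obtain ⟨q₂, hq₂P, hq₂0, hq₂1⟩ := hq₂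
  ext x
  simp only [Set.mem_inter_iff, Set.mem_empty_iff_false, iff_false, not_and]
  intro hx₁ hx₂
  rw [hQ₁] at hx₁; rw [hQ₂] at hx₂
  obtain ⟨hax, hay⟩ := hx₁
  obtain ⟨hbx, hby⟩ := hx₂
  -- a 0 < x 0 < b 0
  have hab : a 0 < b 0 := lt_trans hax hbx
  -- q₂ not in Q₁, so q₂ 1 ≤ a 1
  have h21 : q₂ 1 ≤ a 1 := by
    by_contra h
    push_neg at h
    have : q₂ ∈ Q₁ ∩ P := ⟨by rw [hQ₁]; exact ⟨hq₂0 ▸ hab, h⟩, hq₂P⟩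
    rw [hfree₁] at this; exact this
  have h12 : q₁ 1 ≤ b 1 := by
    by_contra h
    push_neg at h
    have : q₁ ∈ Q₂ ∩ P := ⟨by rw [hQ₂]; exact ⟨hq₁0 ▸ hab, h⟩, hq₁P⟩
    rw [hfree₂] at this; exact this
  have heq : q₁ 1 = q₂ 1 := le_antisymm (le_trans h12 hq₂1) (le_trans h21 hq₁1)
  have hne : q₁ ≠ q₂ := by
    intro h
    rw [h, hq₂0] at hq₁0
    exact absurd hq₁0 (ne_of_gt hab)
  exact hgen q₁ hq₁P q₂ hq₂P hne heq
end

section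
/- Let P be a set of points in ℝ² and a, b ∈ ℝ² with a₁ < b₁ and a₂ < b₂. Suppose the open NE-quadrant Q₁ = {x : x₁ > a₁ ∧ x₂ > a₂} and the open SW-quadrant Q₂ = {x : x₁ < b₁ ∧ x₂ < b₂} are both P-free (note Q₁ ∩ Q₂ ≠ ∅ since a₁ < b₁ and a₂ < b₂), and that there exist p₁ ∈ P with p₁ = (x₁, a₂) for some x₁ ≥ a₁ and q₁ ∈ P with q₁ = (a₁, y₁) for some y₁ ≥ a₂ (points of P on the two closed bounding rays of Q₁). Then the rectilinear convex hull RCH(P) is not preconnected (in particular it is disconnected). (This is the second assertion of the paper's Lemma 'overlap_oriented': when two opposite extremal quadrants overlap, RCH(P) gets disconnected.) -/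
/-- An (axis-parallel) open quadrant in the plane: one of the four forms NE, NW, SW, SE. -/
def IsOpenQuadrant (Q : Set (EuclideanSpace ℝ (Fin 2))) : Prop :=
  ∃ a : EuclideanSpace ℝ (Fin 2),
    Q = {x : EuclideanSpace ℝ (Fin 2) | a 0 < x 0 ∧ a 1 < x 1} ∨
    Q = {x : EuclideanSpace ℝ (Fin 2) | x 0 < a 0 ∧ a 1 < x 1} ∨
    Q = {x : EuclideanSpace ℝ (Fin 2) | x 0 < a 0 ∧ x 1 < a 1} ∨
    Q = {x : EuclideanSpace ℝ (Fin 2) | a 0 < x 0 ∧ x 1 < a 1}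

/-- The rectilinear convex hull of `P`: the plane minus the union of all `P`-free open
axis-parallel quadrants. -/
def rectConvexHull (P : Set (EuclideanSpace ℝ (Fin 2))) : Set (EuclideanSpace ℝ (Fin 2)) :=
  Set.univ \ ⋃ Q ∈ {Q : Set (EuclideanSpace ℝ (Fin 2)) | IsOpenQuadrant Q ∧ Q ∩ P = ∅}, Q

lemma subset_rectConvexHull (P : Set (EuclideanSpace ℝ (Fin 2))) :
    P ⊆ rectConvexHull P := by
  intro x hx
  refine ⟨trivial, ?_⟩
  simp only [Set.mem_iUnion]
  rintro ⟨Q, ⟨-, hQP⟩, hxQ⟩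
  exact Set.eq_empty_iff_forall_notMem.mp hQP x ⟨hxQ, hx⟩

lemma rectConvexHull_disjoint_free_quadrant (P Q : Set (EuclideanSpace ℝ (Fin 2)))
    (hQ : IsOpenQuadrant Q) (hfree : Q ∩ P = ∅) :
    rectConvexHull P ∩ Q = ∅ := by
  ext x
  simp only [Set.mem_inter_iff, Set.mem_empty_iff_false, iff_false, not_and]
  rintro ⟨-, hx⟩ hxQ
  exact hx (Set.mem_biUnion ⟨hQ, hfree⟩ hxQ)

/-- If a `P`-free open NE-quadrant with apex `a` (supported by points of `P`
on each of its two closed bounding rays) overlaps the `P`-free open SW-quadrant with apex `b`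
(i.e. `a 0 < b 0` and `a 1 < b 1`), then the rectilinear convex hull of `P` is not
preconnected. -/
theorem rectConvexHull_not_preconnected_of_overlap
    (P : Set (EuclideanSpace ℝ (Fin 2)))
    (a b : EuclideanSpace ℝ (Fin 2))
    (hab₁ : a 0 < b 0) (hab₂ : a 1 < b 1)
    (hfree₁ : {x : EuclideanSpace ℝ (Fin 2) | a 0 < x 0 ∧ a 1 < x 1} ∩ P = ∅)
    (hfree₂ : {x : EuclideanSpace ℝ (Fin 2) | x 0 < b 0 ∧ x 1 < b 1} ∩ P = ∅)
    (hp₁ : ∃ p₁ ∈ P, p₁ 1 = a 1 ∧ a 0 ≤ p₁ 0)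
    (hq₁ : ∃ q₁ ∈ P, q₁ 0 = a 0 ∧ a 1 ≤ q₁ 1) :
    ¬ IsPreconnected (rectConvexHull P) := by
  obtain ⟨p₁, hp₁P, hp₁y, hp₁x⟩ := hp₁
  obtain ⟨q₁, hq₁P, hq₁x, hq₁y⟩ := hq₁
  -- every point of the hull avoids both free quadrants
  have hQ1 : rectConvexHull P ∩ {x : EuclideanSpace ℝ (Fin 2) | a 0 < x 0 ∧ a 1 < x 1} = ∅ :=
    rectConvexHull_disjoint_free_quadrant P _ ⟨a, Or.inl rfl⟩ hfree₁
  have hQ2 : rectConvexHull P ∩ {x : EuclideanSpace ℝ (Fin 2) | x 0 < b 0 ∧ x 1 < b 1} = ∅ :=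
    rectConvexHull_disjoint_free_quadrant P _ ⟨b, Or.inr (Or.inr (Or.inl rfl))⟩ hfree₂
  have key : ∀ x ∈ rectConvexHull P,
      (x 0 ≤ a 0 ∨ x 1 ≤ a 1) ∧ (b 0 ≤ x 0 ∨ b 1 ≤ x 1) := by
    intro x hx
    constructor
    · by_contra h
      push_neg at h
      exact Set.eq_empty_iff_forall_notMem.mp hQ1 x ⟨hx, h.1, h.2⟩
    · by_contra h
      push_neg at h
      exact Set.eq_empty_iff_forall_notMem.mp hQ2 x ⟨hx, h.1, h.2⟩
  -- p₁ cannot be the apex a (else it lies in the SW free quadrant)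
  have hp₁x' : a 0 < p₁ 0 := by
    rcases lt_or_eq_of_le hp₁x with h | h
    · exact h
    · exfalso
      have : p₁ ∈ {x : EuclideanSpace ℝ (Fin 2) | x 0 < b 0 ∧ x 1 < b 1} ∩ P :=
        ⟨⟨by rw [← h]; exact hab₁, by rw [hp₁y]; exact hab₂⟩, hp₁P⟩
      rw [hfree₂] at this
      exact this
  intro hpre
  have := hpre {x : EuclideanSpace ℝ (Fin 2) | x 0 < b 0}
    {x : EuclideanSpace ℝ (Fin 2) | a 0 < x 0}
    (isOpen_lt (EuclideanSpace.proj (0 : Fin 2)).continuous continuous_const)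
    (isOpen_lt continuous_const (EuclideanSpace.proj (0 : Fin 2)).continuous)
    (by
      intro x hx
      obtain ⟨h1, h2⟩ := key x hx
      rcases h1 with h | h
      · exact Or.inl (lt_of_le_of_lt h hab₁)
      · rcases h2 with h' | h'
        · exact Or.inr (lt_of_lt_of_le hab₁ h')
        · exact absurd (lt_of_lt_of_le hab₂ h') (not_lt.mpr h))
    ⟨q₁, subset_rectConvexHull P hq₁P, by simpa [hq₁x] using hab₁⟩
    ⟨p₁, subset_rectConvexHull P hp₁P, hp₁x'⟩
  obtain ⟨x, hx, hxb, hxa⟩ := this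
  obtain ⟨h1, h2⟩ := key x hx
  rcases h1 with h | h
  · exact absurd hxa (not_lt.mpr h)
  · rcases h2 with h' | h'
    · exact absurd hxb (not_lt.mpr h')
    · exact absurd (lt_of_lt_of_le hab₂ h') (not_lt.mpr h)
end

section
/- Let n₁, n₂ be unit vectors in ℝ² and ω ∈ (0, π) with ⟪n₁, n₂⟫ = −cos ω (so the open wedge {x : ⟪n₁, x − b⟫ > 0 ∧ ⟪n₂, x − b⟫ > 0} with apex b has aperture angle ω). Let a, b, c ∈ ℝ² with a ≠ b and c ≠ b, and suppose ⟪n₁, a − b⟫ ≥ 0, ⟪n₂, a − b⟫ ≤ 0, ⟪n₁, c − b⟫ ≤ 0 and ⟪n₂, c − b⟫ ≥ 0 (i.e., a and c lie outside the wedge, on the two opposite closed sides of its bounding rays). Then the Euclidean angle ∠ a b c is at least ω. (This is the generalization, used in Section 3.4 for O-wedges of aperture Θ ≥ π/2, of the paper's Lemma 'linear:angle' on the angle at points of a link.) -/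
open scoped RealInnerProductSpace
open EuclideanGeometry

private lemma wedge_abstract (Q F l1 k1 l2 k2 P : ℝ) (hF : 0 < F) (hQF : Q^2 + F^2 = 1)
    (hl1 : 0 ≤ l1) (hk1 : 0 ≤ k1) (hl2 : 0 ≤ l2) (hk2 : 0 ≤ k2)
    (h1 : l1^2 + k1^2 + 2*l1*k1*Q = F^2)
    (h2 : l2^2 + k2^2 + 2*l2*k2*Q = F^2)
    (hP : F^2*P = -(l1*l2 + k1*k2 + Q*(l1*k2 + k1*l2))) :
    P + Q ≤ 0 := by
  have hQ1 : Q < 1 := by nlinarith [mul_pos hF hF]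
  have hQ2 : -1 < Q := by nlinarith [mul_pos hF hF]
  have hS1 : F ≤ l1 + k1 := by nlinarith [mul_nonneg hl1 hk1]
  have hS2 : F ≤ l2 + k2 := by nlinarith [mul_nonneg hl2 hk2]
  have hD1 : (l1-k1)^2 ≤ F^2 := by nlinarith [mul_nonneg hl1 hk1]
  have hD2 : (l2-k2)^2 ≤ F^2 := by nlinarith [mul_nonneg hl2 hk2]
  have hX1 : 0 ≤ (l1+k1)*(l2+k2) - F^2 := by nlinarith
  have hX2 : 0 ≤ (l1-k1)*(l2-k2) + F^2 := by nlinarith [sq_nonneg ((l1-k1)+(l2-k2))]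
  have key : F^2 * (P + Q) ≤ 0 := by
    nlinarith [mul_nonneg (by linarith : (0:ℝ) ≤ 1+Q) hX1,
               mul_nonneg (by linarith : (0:ℝ) ≤ 1-Q) hX2]
  nlinarith [mul_pos hF hF]

private lemma aux_pos (u0 u1 v0 v1 m0 m1 n0 n1 : ℝ)
    (hu : u0^2+u1^2 = 1) (hv : v0^2+v1^2 = 1) (hm : m0^2+m1^2 = 1) (hn : n0^2+n1^2 = 1)
    (hF : 0 < m0*n1 - m1*n0)
    (ha : 0 ≤ m0*u0+m1*u1) (hb : n0*u0+n1*u1 ≤ 0)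
    (hc : m0*v0+m1*v1 ≤ 0) (hd : 0 ≤ n0*v0+n1*v1) :
    u0*v0+u1*v1 + (m0*n0+m1*n1) ≤ 0 := by
  refine wedge_abstract (m0*n0+m1*n1) (m0*n1-m1*n0) (-(n0*u0+n1*u1)) (m0*u0+m1*u1)
    (n0*v0+n1*v1) (-(m0*v0+m1*v1)) (u0*v0+u1*v1) hF ?_ (by linarith) ha hd (by linarith)
    ?_ ?_ ?_
  · linear_combination (m0^2+m1^2)*hn + hm
  · linear_combination (-((m0*u0+m1*u1)^2))*hn - ((n0*u0+n1*u1)^2)*hm +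
      ((m0^2+m1^2)*(n0^2+n1^2) - (m0*n0+m1*n1)^2)*hu
  · linear_combination (-((m0*v0+m1*v1)^2))*hn - ((n0*v0+n1*v1)^2)*hm +
      ((m0^2+m1^2)*(n0^2+n1^2) - (m0*n0+m1*n1)^2)*hv
  · linear_combination ((m0*u0+m1*u1)*(m0*v0+m1*v1))*hn + ((n0*u0+n1*u1)*(n0*v0+n1*v1))*hm

private lemma key8 (u0 u1 v0 v1 m0 m1 n0 n1 : ℝ)
    (hu : u0^2+u1^2 = 1) (hv : v0^2+v1^2 = 1) (hm : m0^2+m1^2 = 1) (hn : n0^2+n1^2 = 1)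
    (hQlt : m0*n0+m1*n1 < 1)
    (ha : 0 ≤ m0*u0+m1*u1) (hb : n0*u0+n1*u1 ≤ 0)
    (hc : m0*v0+m1*v1 ≤ 0) (hd : 0 ≤ n0*v0+n1*v1) :
    u0*v0+u1*v1 + (m0*n0+m1*n1) ≤ 0 := by
  rcases lt_trichotomy (m0*n1 - m1*n0) 0 with hF | hF | hF
  · have := aux_pos v0 v1 u0 u1 n0 n1 m0 m1 hv hu hn hm (by linarith) hd hc hb ha
    linarith [this]
  · have hQF : (m0*n0+m1*n1)^2 + (m0*n1-m1*n0)^2 = 1 := by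
      linear_combination (m0^2+m1^2)*hn + hm
    have hQ : m0*n0+m1*n1 = -1 := by nlinarith
    have huv : u0*v0+u1*v1 ≤ 1 := by
      nlinarith [sq_nonneg (u0*v1-u1*v0), sq_nonneg (u0*v0+u1*v1)]
    linarith
  · exact aux_pos u0 u1 v0 v1 m0 m1 n0 n1 hu hv hm hn hF ha hb hc hd

private lemma inner2 (x y : EuclideanSpace ℝ (Fin 2)) : ⟪x, y⟫ = x 0 * y 0 + x 1 * y 1 := by
  simp [PiLp.inner_apply, Fin.sum_univ_two]
  ring

private lemma sq2 {x : EuclideanSpace ℝ (Fin 2)} (hx : ‖x‖ = 1) : (x 0)^2 + (x 1)^2 = 1 := by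
  have h := real_inner_self_eq_norm_sq x
  rw [inner2, hx] at h
  nlinarith [h]

/-- Key vector lemma for unit vectors. -/
private lemma key_vec (u v m n : EuclideanSpace ℝ (Fin 2))
    (hu : ‖u‖ = 1) (hv : ‖v‖ = 1) (hm : ‖m‖ = 1) (hn : ‖n‖ = 1)
    (hQlt : ⟪m, n⟫ < 1)
    (ha : 0 ≤ ⟪m, u⟫) (hb : ⟪n, u⟫ ≤ 0) (hc : ⟪m, v⟫ ≤ 0) (hd : 0 ≤ ⟪n, v⟫) :
    ⟪u, v⟫ + ⟪m, n⟫ ≤ 0 := by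
  rw [inner2] at hQlt ha hb hc hd ⊢
  rw [inner2]
  exact key8 (u 0) (u 1) (v 0) (v 1) (m 0) (m 1) (n 0) (n 1)
    (sq2 hu) (sq2 hv) (sq2 hm) (sq2 hn) hQlt ha hb hc hd

/-- Let `n₁, n₂` be unit vectors with `⟪n₁, n₂⟫ = -cos ω`, `ω ∈ (0, π)`, so
that the open wedge `{x | ⟪n₁, x - b⟫ > 0 ∧ ⟪n₂, x - b⟫ > 0}` with apex `b` has aperture `ω`.
If `a` and `c` lie outside the wedge on the two opposite closed sides of its bounding rays,
then the Euclidean angle `∠ a b c` is at least `ω`. -/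
theorem angle_ge_aperture_of_opposite_sides_of_wedge
    (n₁ n₂ : EuclideanSpace ℝ (Fin 2)) (hn₁ : ‖n₁‖ = 1) (hn₂ : ‖n₂‖ = 1)
    (ω : ℝ) (hω₀ : 0 < ω) (hωπ : ω < Real.pi)
    (hn : ⟪n₁, n₂⟫ = -Real.cos ω)
    (a b c : EuclideanSpace ℝ (Fin 2)) (hab : a ≠ b) (hcb : c ≠ b)
    (ha₁ : 0 ≤ ⟪n₁, a - b⟫) (ha₂ : ⟪n₂, a - b⟫ ≤ 0)
    (hc₁ : ⟪n₁, c - b⟫ ≤ 0) (hc₂ : 0 ≤ ⟪n₂, c - b⟫) :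
    ω ≤ ∠ a b c := by
  set u := a - b with hu
  set v := c - b with hv
  have hu0 : u ≠ 0 := sub_ne_zero.mpr hab
  have hv0 : v ≠ 0 := sub_ne_zero.mpr hcb
  have hun : (0:ℝ) < ‖u‖ := norm_pos_iff.mpr hu0
  have hvn : (0:ℝ) < ‖v‖ := norm_pos_iff.mpr hv0
  set u' : EuclideanSpace ℝ (Fin 2) := (‖u‖⁻¹ : ℝ) • u with hu'
  set v' : EuclideanSpace ℝ (Fin 2) := (‖v‖⁻¹ : ℝ) • v with hv'
  have hu'1 : ‖u'‖ = 1 := norm_smul_inv_norm (𝕜 := ℝ) hu0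
  have hv'1 : ‖v'‖ = 1 := norm_smul_inv_norm (𝕜 := ℝ) hv0
  have hcosω : -1 < Real.cos ω := by
    have h := Real.strictAntiOn_cos ⟨hω₀.le, hωπ.le⟩ ⟨Real.pi_pos.le, le_refl Real.pi⟩ hωπ
    rw [Real.cos_pi] at h
    linarith
  have hQlt' : ⟪n₁, n₂⟫ < 1 := by rw [hn]; linarith
  have key : ⟪u', v'⟫ + ⟪n₁, n₂⟫ ≤ 0 := by
    apply key_vec u' v' n₁ n₂ hu'1 hv'1 hn₁ hn₂ hQlt'
    · rw [hu', real_inner_smul_right]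
      exact mul_nonneg (inv_nonneg.mpr (norm_nonneg u)) ha₁
    · rw [hu', real_inner_smul_right]
      exact mul_nonpos_of_nonneg_of_nonpos (inv_nonneg.mpr (norm_nonneg u)) ha₂
    · rw [hv', real_inner_smul_right]
      exact mul_nonpos_of_nonneg_of_nonpos (inv_nonneg.mpr (norm_nonneg v)) hc₁
    · rw [hv', real_inner_smul_right]
      exact mul_nonneg (inv_nonneg.mpr (norm_nonneg v)) hc₂
  have hinner : ⟪u', v'⟫ = ⟪u, v⟫ / (‖u‖ * ‖v‖) := by
    rw [hu', hv', real_inner_smul_left, real_inner_smul_right]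
    field_simp
  have hcos : Real.cos (∠ a b c) = ⟪u, v⟫ / (‖u‖ * ‖v‖) := by
    rw [EuclideanGeometry.angle]
    have : (a -ᵥ b : EuclideanSpace ℝ (Fin 2)) = u := rfl
    have h2 : (c -ᵥ b : EuclideanSpace ℝ (Fin 2)) = v := rfl
    rw [this, h2, InnerProductGeometry.cos_angle]
  have hfinal : Real.cos (∠ a b c) ≤ Real.cos ω := by
    rw [hcos]
    have : ⟪u, v⟫ / (‖u‖ * ‖v‖) + ⟪n₁, n₂⟫ ≤ 0 := by rw [← hinner]; exact key
    rw [hn] at this; linarith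
  by_contra hlt
  push_neg at hlt
  have := Real.strictAntiOn_cos ⟨EuclideanGeometry.angle_nonneg a b c,
    (EuclideanGeometry.angle_le_pi a b c)⟩ ⟨hω₀.le, hωπ.le⟩ hlt
  linarith
end

section
/- Let u, v ∈ ℝ² be orthonormal vectors (⟪u,v⟫ = 0, ‖u‖ = ‖v‖ = 1) and let P ⊆ ℝ² be a finite point set. Define RCH_{u,v}(P) = ℝ² \ ⋃ W, the union being over all P-free (u,v)-quadrants W. Then P ⊆ RCH_{u,v}(P) ⊆ convexHull(P), and consequently convexHull(RCH_{u,v}(P)) = convexHull(P). (This identity, CH(RCH_θ(P)) = CH(P) for every rotation angle θ, is the fact used in the paper to derive the Ω(n log n) lower bound proving optimality of its algorithms.) -/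
open scoped RealInnerProductSpace

/-- The `(u,v)`-quadrant with apex `a` and signs `ε, δ ∈ {+1, −1}`:
`{x | ε⟪u, x − a⟫ > 0 ∧ δ⟪v, x − a⟫ > 0}`. -/
def rotQuadrant (u v a : EuclideanSpace ℝ (Fin 2)) (ε δ : ℝ) :
    Set (EuclideanSpace ℝ (Fin 2)) :=
  {x | 0 < ε * ⟪u, x - a⟫ ∧ 0 < δ * ⟪v, x - a⟫}

/-- The rectilinear convex hull of `P` with respect to the rotated axes `u, v`:
the plane minus the union of all `P`-free `(u,v)`-quadrants. -/
def rotRCH (u v : EuclideanSpace ℝ (Fin 2)) (P : Set (EuclideanSpace ℝ (Fin 2))) :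
    Set (EuclideanSpace ℝ (Fin 2)) :=
  {x | ∀ (a : EuclideanSpace ℝ (Fin 2)) (ε δ : ℝ), (ε = 1 ∨ ε = -1) → (δ = 1 ∨ δ = -1) →
    rotQuadrant u v a ε δ ∩ P = ∅ → x ∉ rotQuadrant u v a ε δ}

/-- Decomposition of a vector along an orthonormal pair in the plane. -/
lemma ortho_decomp (u v : EuclideanSpace ℝ (Fin 2))
    (hu : ‖u‖ = 1) (hv : ‖v‖ = 1) (huv : ⟪u, v⟫ = 0) (w : EuclideanSpace ℝ (Fin 2)) :
    w = ⟪u, w⟫ • u + ⟪v, w⟫ • v := by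
  have hvu : ⟪v, u⟫ = 0 := by rw [real_inner_comm]; exact huv
  have huu : ⟪u, u⟫ = 1 := by rw [real_inner_self_eq_norm_sq, hu]; norm_num
  have hvv : ⟪v, v⟫ = 1 := by rw [real_inner_self_eq_norm_sq, hv]; norm_num
  have hli : LinearIndependent ℝ ![u, v] := by
    rw [LinearIndependent.pair_iff]
    intro s t hst
    have h1 : ⟪u, s • u + t • v⟫ = 0 := by rw [hst]; simp
    have h2 : ⟪v, s • u + t • v⟫ = 0 := by rw [hst]; simp
    rw [inner_add_right, real_inner_smul_right, real_inner_smul_right, huv, huu] at h1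
    rw [inner_add_right, real_inner_smul_right, real_inner_smul_right, hvu, hvv] at h2
    constructor <;> linarith
  have hspan : Submodule.span ℝ ({u, v} : Set _) = ⊤ := by
    apply Submodule.eq_top_of_finrank_eq
    have hr : ({u, v} : Set _) = Set.range ![u, v] := by
      ext y; simp [Fin.exists_fin_two]; tauto
    rw [hr, finrank_span_eq_card hli]
    simp [finrank_euclideanSpace]
  set z := w - ⟪u, w⟫ • u - ⟪v, w⟫ • v with hz
  have hzu : ⟪u, z⟫ = 0 := by
    rw [hz, inner_sub_right, inner_sub_right, real_inner_smul_right,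
      real_inner_smul_right, huv, huu]; ring
  have hzv : ⟪v, z⟫ = 0 := by
    rw [hz, inner_sub_right, inner_sub_right, real_inner_smul_right,
      real_inner_smul_right, hvu, hvv]; ring
  have hzmem : z ∈ Submodule.span ℝ ({u, v} : Set _) := by rw [hspan]; trivial
  obtain ⟨a, b, hab⟩ := Submodule.mem_span_pair.mp hzmem
  have hzz : ⟪z, z⟫ = 0 := by
    nth_rewrite 1 [← hab]
    rw [inner_add_left, real_inner_smul_left, real_inner_smul_left, hzu, hzv]; ring
  have hz0 : z = 0 := by rwa [inner_self_eq_zero] at hzz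
  rw [hz, sub_sub, sub_eq_zero] at hz0
  exact hz0

/-- A positive lower bound for a positive function on a finite set. -/
lemma exists_pos_lb {α : Type*} {s : Set α} (hs : s.Finite) (g : α → ℝ)
    (hg : ∀ p ∈ s, 0 < g p) : ∃ r : ℝ, 0 < r ∧ ∀ p ∈ s, r ≤ g p := by
  rcases s.eq_empty_or_nonempty with h | h
  · exact ⟨1, one_pos, by simp [h]⟩
  · have hF : (hs.toFinset.image g).Nonempty := by
      simpa using (Set.Finite.toFinset_nonempty hs).mpr h
    refine ⟨(hs.toFinset.image g).min' hF, ?_, ?_⟩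
    · obtain ⟨p, hp, hpe⟩ := Finset.mem_image.mp ((hs.toFinset.image g).min'_mem hF)
      rw [← hpe]; exact hg p (hs.mem_toFinset.mp hp)
    · intro p hp
      exact Finset.min'_le _ _ (Finset.mem_image_of_mem g (hs.mem_toFinset.mpr hp))

/-- For orthonormal `u, v` and finite `P ⊆ ℝ²`, one has
`P ⊆ RCH_{u,v}(P) ⊆ convexHull P`, and consequently
`convexHull (RCH_{u,v}(P)) = convexHull P`. -/
theorem rotRCH_between_P_and_convexHull
    (u v : EuclideanSpace ℝ (Fin 2))
    (hu : ‖u‖ = 1) (hv : ‖v‖ = 1) (huv : ⟪u, v⟫ = 0)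
    (P : Set (EuclideanSpace ℝ (Fin 2))) (hP : P.Finite) :
    P ⊆ rotRCH u v P ∧ rotRCH u v P ⊆ convexHull ℝ P ∧
      convexHull ℝ (rotRCH u v P) = convexHull ℝ P := by
  have hvu : ⟪v, u⟫ = 0 := by rw [real_inner_comm]; exact huv
  have huu : ⟪u, u⟫ = 1 := by rw [real_inner_self_eq_norm_sq, hu]; norm_num
  have hvv : ⟪v, v⟫ = 1 := by rw [real_inner_self_eq_norm_sq, hv]; norm_num
  have h1 : P ⊆ rotRCH u v P := by
    intro x hx a ε δ hε hδ hempty hxQ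
    exact Set.eq_empty_iff_forall_notMem.mp hempty x ⟨hxQ, hx⟩
  have h2 : rotRCH u v P ⊆ convexHull ℝ P := by
    intro x hx
    by_contra hxc
    obtain ⟨f, c, hfc, hfb⟩ := geometric_hahn_banach_point_closed
      (convex_convexHull ℝ P) (hP.isClosed_convexHull ℝ) hxc
    have hfP : ∀ p ∈ P, 0 < f p - f x := fun p hp => by
      have := hfb p (subset_convexHull ℝ P hp); linarith
    set ε : ℝ := if f u ≤ 0 then 1 else -1 with hεdef
    set δ : ℝ := if f v ≤ 0 then 1 else -1 with hδdef
    have hε : ε = 1 ∨ ε = -1 := by rw [hεdef]; split_ifs <;> simp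
    have hδ : δ = 1 ∨ δ = -1 := by rw [hδdef]; split_ifs <;> simp
    have hε2 : ε * ε = 1 := by rcases hε with h | h <;> rw [h] <;> norm_num
    have hδ2 : δ * δ = 1 := by rcases hδ with h | h <;> rw [h] <;> norm_num
    have hεfu : ε * f u ≤ 0 := by
      rw [hεdef]; split_ifs with h <;> nlinarith [h]
    have hδfv : δ * f v ≤ 0 := by
      rw [hδdef]; split_ifs with h <;> nlinarith [h]
    -- each point of P has a strictly negative coordinate w.r.t. the (ε,δ)-quadrant at x
    have hg : ∀ p ∈ P, 0 < -(min (ε * ⟪u, p - x⟫) (δ * ⟪v, p - x⟫)) := by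
      intro p hp
      by_contra hcon
      push_neg at hcon
      have hmin : 0 ≤ min (ε * ⟪u, p - x⟫) (δ * ⟪v, p - x⟫) := by linarith
      have hs : 0 ≤ ε * ⟪u, p - x⟫ := le_trans hmin (min_le_left _ _)
      have ht : 0 ≤ δ * ⟪v, p - x⟫ := le_trans hmin (min_le_right _ _)
      have hdec := ortho_decomp u v hu hv huv (p - x)
      have hfpx : f (p - x) = ⟪u, p - x⟫ * f u + ⟪v, p - x⟫ * f v := by
        nth_rewrite 1 [hdec]
        rw [map_add, map_smul, map_smul]; simp [mul_comm]
      rw [map_sub] at hfpx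
      have hpos := hfP p hp
      have e1 : ⟪u, p - x⟫ * f u = (ε * ⟪u, p - x⟫) * (ε * f u) := by
        linear_combination (-(⟪u, p - x⟫ * f u)) * hε2
      have e2 : ⟪v, p - x⟫ * f v = (δ * ⟪v, p - x⟫) * (δ * f v) := by
        linear_combination (-(⟪v, p - x⟫ * f v)) * hδ2
      have n1 : ⟪u, p - x⟫ * f u ≤ 0 := by
        rw [e1]; exact mul_nonpos_of_nonneg_of_nonpos hs hεfu
      have n2 : ⟪v, p - x⟫ * f v ≤ 0 := by
        rw [e2]; exact mul_nonpos_of_nonneg_of_nonpos ht hδfv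
      linarith
    obtain ⟨r, hr, hrle⟩ := exists_pos_lb hP _ hg
    set a : EuclideanSpace ℝ (Fin 2) := x - r • (ε • u + δ • v) with ha
    have hxa : x - a = r • (ε • u + δ • v) := by rw [ha]; abel
    have hiu : ⟪u, x - a⟫ = r * ε := by
      rw [hxa, real_inner_smul_right, inner_add_right, real_inner_smul_right,
        real_inner_smul_right, huu, huv]; ring
    have hiv : ⟪v, x - a⟫ = r * δ := by
      rw [hxa, real_inner_smul_right, inner_add_right, real_inner_smul_right,
        real_inner_smul_right, hvu, hvv]; ring
    have eε : ε * (r * ε) = r := by linear_combination r * hε2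
    have eδ : δ * (r * δ) = r := by linear_combination r * hδ2
    have hxQ : x ∈ rotQuadrant u v a ε δ := by
      refine ⟨?_, ?_⟩
      · rw [hiu, eε]; exact hr
      · rw [hiv, eδ]; exact hr
    have hempty : rotQuadrant u v a ε δ ∩ P = ∅ := by
      rw [Set.eq_empty_iff_forall_notMem]
      rintro p ⟨⟨hpu, hpv⟩, hpP⟩
      have hpa : p - a = (p - x) + (x - a) := by abel
      have h1' : ⟪u, p - a⟫ = ⟪u, p - x⟫ + r * ε := by
        rw [hpa, inner_add_right, hiu]
      have h2' : ⟪v, p - a⟫ = ⟪v, p - x⟫ + r * δ := by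
        rw [hpa, inner_add_right, hiv]
      rw [h1'] at hpu
      rw [h2'] at hpv
      have hmle := hrle p hpP
      have e1 : ε * (⟪u, p - x⟫ + r * ε) = ε * ⟪u, p - x⟫ + r := by
        linear_combination r * hε2
      have e2 : δ * (⟪v, p - x⟫ + r * δ) = δ * ⟪v, p - x⟫ + r := by
        linear_combination r * hδ2
      rw [e1] at hpu
      rw [e2] at hpv
      have hlt1 : -r < ε * ⟪u, p - x⟫ := by linarith
      have hlt2 : -r < δ * ⟪v, p - x⟫ := by linarith
      have := lt_min hlt1 hlt2
      linarith [hmle]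
    exact hx a ε δ hε hδ hempty hxQ
  refine ⟨h1, h2, ?_⟩
  apply le_antisymm
  · calc convexHull ℝ (rotRCH u v P) ⊆ convexHull ℝ (convexHull ℝ P) := convexHull_mono h2
      _ = convexHull ℝ P := (convex_convexHull ℝ P).convexHull_eq
  · exact convexHull_mono h1
end

section
/- Let w ∈ ℝ² be a nonzero vector, c ∈ ℝ, and let x ∈ ℝ² satisfy ⟪w, x⟫ > c. Then there exist an apex a ∈ ℝ² and signs ε, δ ∈ {+1, −1} such that the open axis-parallel quadrant Q = {y ∈ ℝ² : ε(y₁ − a₁) > 0 ∧ δ(y₂ − a₂) > 0} contains x and is contained in the open half-plane {y : ⟪w, y⟫ > c}. (This is the covering claim underlying the paper's containment RCH_θ(P) ⊆ CH(P): every point outside the convex hull of P lies in a P-free open quadrant, because any open half-plane witnessing separation contains, around any of its points, an axis-parallel open quadrant of one of the four orientations.) -/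
open scoped RealInnerProductSpace

/-- Every point `x` of an open half-plane `{y | ⟪w, y⟫ > c}` (with `w ≠ 0`)
is contained in an open axis-parallel quadrant that is itself contained in the half-plane. -/
theorem exists_quadrant_in_halfplane
    (w : EuclideanSpace ℝ (Fin 2)) (hw : w ≠ 0) (c : ℝ)
    (x : EuclideanSpace ℝ (Fin 2)) (hx : c < ⟪w, x⟫) :
    ∃ (a : EuclideanSpace ℝ (Fin 2)) (ε δ : ℝ),
      (ε = 1 ∨ ε = -1) ∧ (δ = 1 ∨ δ = -1) ∧
      (0 < ε * (x 0 - a 0) ∧ 0 < δ * (x 1 - a 1)) ∧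
      ∀ y : EuclideanSpace ℝ (Fin 2),
        (0 < ε * (y 0 - a 0) ∧ 0 < δ * (y 1 - a 1)) → c < ⟪w, y⟫ := by
  have hinner : ∀ u v : EuclideanSpace ℝ (Fin 2), ⟪u, v⟫ = u 0 * v 0 + u 1 * v 1 := by
    intro u v
    simp [PiLp.inner_apply, RCLike.inner_apply, Fin.sum_univ_two]; ring
  have hn : 0 < |w 0| + |w 1| := by
    by_contra h
    push_neg at h
    have h0 : |w 0| = 0 := le_antisymm (by nlinarith [abs_nonneg (w 1)]) (abs_nonneg _)
    have h1 : |w 1| = 0 := le_antisymm (by nlinarith [abs_nonneg (w 0)]) (abs_nonneg _)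
    rw [abs_eq_zero] at h0 h1
    apply hw
    ext i
    fin_cases i <;> simpa
  set ε : ℝ := if 0 ≤ w 0 then 1 else -1 with hεdef
  set δ : ℝ := if 0 ≤ w 1 then 1 else -1 with hδdef
  have hε : ε * w 0 = |w 0| := by
    rw [hεdef]; split_ifs with h
    · rw [one_mul, abs_of_nonneg h]
    · rw [abs_of_neg (lt_of_not_ge h)]; ring
  have hδ : δ * w 1 = |w 1| := by
    rw [hδdef]; split_ifs with h
    · rw [one_mul, abs_of_nonneg h]
    · rw [abs_of_neg (lt_of_not_ge h)]; ring
  have hε2 : ε * ε = 1 := by rw [hεdef]; split_ifs <;> norm_num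
  have hδ2 : δ * δ = 1 := by rw [hδdef]; split_ifs <;> norm_num
  set t : ℝ := (⟪w, x⟫ - c) / (2 * (|w 0| + |w 1|)) with htdef
  have ht : 0 < t := by
    apply div_pos (by linarith) (by linarith)
  have htval : t * (2 * (|w 0| + |w 1|)) = ⟪w, x⟫ - c := by
    rw [htdef, div_mul_cancel₀]; linarith
  clear_value t
  refine ⟨!₂[x 0 - ε * t, x 1 - δ * t], ε, δ, ?_, ?_, ?_, ?_⟩
  · rw [hεdef]; split_ifs <;> simp
  · rw [hδdef]; split_ifs <;> simp
  · constructor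
    · show 0 < ε * (x 0 - (x 0 - ε * t))
      have : ε * (x 0 - (x 0 - ε * t)) = (ε * ε) * t := by ring
      rw [this, hε2, one_mul]; exact ht
    · show 0 < δ * (x 1 - (x 1 - δ * t))
      have : δ * (x 1 - (x 1 - δ * t)) = (δ * δ) * t := by ring
      rw [this, hδ2, one_mul]; exact ht
  · rintro y ⟨hy0, hy1⟩
    have e0 : (0 : ℝ) ≤ |w 0| * (ε * (y 0 - (x 0 - ε * t))) :=
      mul_nonneg (abs_nonneg _) (le_of_lt hy0)
    have e1 : (0 : ℝ) ≤ |w 1| * (δ * (y 1 - (x 1 - δ * t))) :=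
      mul_nonneg (abs_nonneg _) (le_of_lt hy1)
    have hw0 : w 0 = ε * |w 0| := by
      calc w 0 = ε * (ε * w 0) := by rw [← mul_assoc, hε2, one_mul]
        _ = ε * |w 0| := by rw [hε]
    have hw1 : w 1 = δ * |w 1| := by
      calc w 1 = δ * (δ * w 1) := by rw [← mul_assoc, hδ2, one_mul]
        _ = δ * |w 1| := by rw [hδ]
    have h20 : |w 0| * (ε * (y 0 - (x 0 - ε * t))) = w 0 * y 0 - w 0 * x 0 + |w 0| * t := by
      linear_combination (x 0 - y 0) * hw0 + (|w 0| * t) * hε2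
    have h21 : |w 1| * (δ * (y 1 - (x 1 - δ * t))) = w 1 * y 1 - w 1 * x 1 + |w 1| * t := by
      linear_combination (x 1 - y 1) * hw1 + (|w 1| * t) * hδ2
    have key0 : w 0 * y 0 ≥ w 0 * x 0 - |w 0| * t := by rw [h20] at e0; linarith
    have key1 : w 1 * y 1 ≥ w 1 * x 1 - |w 1| * t := by rw [h21] at e1; linarith
    rw [hinner w y]
    rw [hinner w x] at htval
    nlinarith [hn, ht]
end
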